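/- Let (𝒢_i)_{i∈I} be a family of locally compact groupoids satisfying the weak gluing condition. If each 𝒢_i is a Hausdorff topological space, then the glued groupoid 𝒢 = ⋃_{i∈I} 𝒢_i is Hausdorff. -/

import Mathlib

/-!
Statement 0: gluing of locally compact groupoids.  We model a (locally compact)
groupoid `𝒢 ⇉ U` over a set of units `U ⊆ X` by a type `A` of arrows together
with (total) structural maps; multiplication is a total function whose value is
only relevant on composable pairs.  The gluing is the quotient of the disjoint
union `Σ i, A i` by the relation generated by `g ∼ φ_{ji} g`.
-/

universe u v

/-- An (algebraic) groupoid with arrow space `A` over the set of units `U ⊆ X`. -/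
structure GroupoidOn (X : Type u) (A : Type v) (U : Set X) where
  d : A → X
  r : A → X
  unit : U → A
  inv : A → A
  mul : A → A → A
  d_mem : ∀ g, d g ∈ U
  r_mem : ∀ g, r g ∈ U
  d_unit : ∀ x : U, d (unit x) = x
  r_unit : ∀ x : U, r (unit x) = x
  d_inv : ∀ g, d (inv g) = r g
  r_inv : ∀ g, r (inv g) = d g
  d_mul : ∀ g h, d g = r h → d (mul g h) = d h
  r_mul : ∀ g h, d g = r h → r (mul g h) = r g
  mul_assoc' : ∀ g h k, d g = r h → d h = r k → mul (mul g h) k = mul g (mul h k)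
  unit_mul : ∀ g, mul (unit ⟨r g, r_mem g⟩) g = g
  mul_unit : ∀ g, mul g (unit ⟨d g, d_mem g⟩) = g
  mul_inv : ∀ g, mul g (inv g) = unit ⟨r g, r_mem g⟩
  inv_mul : ∀ g, mul (inv g) g = unit ⟨d g, d_mem g⟩

namespace GroupoidOn

variable {X : Type u} {A : Type v} {U : Set X}

/-- The reduction set `𝒢|_V = d⁻¹(V) ∩ r⁻¹(V)` of a groupoid to `V ⊆ X`. -/
def res (G : GroupoidOn X A U) (V : Set X) : Set A :=
  {g | G.d g ∈ V ∧ G.r g ∈ V}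

end GroupoidOn

/-- `G` is a topological groupoid: continuous structural maps, `d` surjective
(onto the units) and open. Together with local compactness of the arrow and unit
spaces this is the notion of a locally compact groupoid. -/
structure IsTopGroupoid {X : Type u} {A : Type v} {U : Set X}
    [TopologicalSpace X] [TopologicalSpace A] (G : GroupoidOn X A U) : Prop where
  continuous_d : Continuous G.d
  continuous_r : Continuous G.r
  continuous_unit : Continuous G.unit
  continuous_inv : Continuous G.inv
  continuousOn_mul : ContinuousOn (fun p : A × A => G.mul p.1 p.2)
    {p : A × A | G.d p.1 = G.r p.2}
  d_surj : U ⊆ Set.range G.d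
  isOpenMap_d : IsOpenMap G.d

/-- The data needed to glue a family of locally compact groupoids `𝒢_i ⇉ U_i`
over an open cover `(U_i)` of `X`, via compatible isomorphisms
`φ_{ij} : 𝒢_i|_{U_i ∩ U_j} → 𝒢_j|_{U_i ∩ U_j}` of topological groupoids. -/
structure GluingData (X : Type u) [TopologicalSpace X] (I : Type v)
    (U : I → Set X) (A : I → Type u) [∀ i, TopologicalSpace (A i)] where
  G : ∀ i, GroupoidOn X (A i) (U i)
  top : ∀ i, IsTopGroupoid (G i)
  open_U : ∀ i, IsOpen (U i)
  cover : ∀ x : X, ∃ i, x ∈ U i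
  φ : ∀ i j, A i → A j
  φ_mapsTo : ∀ i j, Set.MapsTo (φ i j) ((G i).res (U i ∩ U j)) ((G j).res (U i ∩ U j))
  φ_d : ∀ i j, ∀ g ∈ (G i).res (U i ∩ U j), (G j).d (φ i j g) = (G i).d g
  φ_r : ∀ i j, ∀ g ∈ (G i).res (U i ∩ U j), (G j).r (φ i j g) = (G i).r g
  φ_unit : ∀ i j, ∀ (x : X) (hx : x ∈ U i ∩ U j),
    φ i j ((G i).unit ⟨x, hx.1⟩) = (G j).unit ⟨x, hx.2⟩
  φ_inv : ∀ i j, ∀ g ∈ (G i).res (U i ∩ U j), φ i j ((G i).inv g) = (G j).inv (φ i j g)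
  φ_mul : ∀ i j, ∀ g h, g ∈ (G i).res (U i ∩ U j) → h ∈ (G i).res (U i ∩ U j) →
    (G i).d g = (G i).r h →
    φ i j ((G i).mul g h) = (G j).mul (φ i j g) (φ i j h)
  φ_id : ∀ i g, φ i i g = g
  φ_symm : ∀ i j, ∀ g ∈ (G i).res (U i ∩ U j), φ j i (φ i j g) = g
  φ_trans : ∀ i j k, ∀ g ∈ (G i).res (U i ∩ U j ∩ U k), φ j k (φ i j g) = φ i k g
  φ_cont : ∀ i j, ContinuousOn (φ i j) ((G i).res (U i ∩ U j))

namespace GluingData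

variable {X : Type u} [TopologicalSpace X] {I : Type v}
  {U : I → Set X} {A : I → Type u} [∀ i, TopologicalSpace (A i)]

/-- The relation `g ∼ φ_{ij} g` on the disjoint union of the arrow spaces. -/
def Rel (D : GluingData X I U A) : (Σ i, A i) → (Σ i, A i) → Prop :=
  fun p q => p.2 ∈ (D.G p.1).res (U p.1 ∩ U q.1) ∧ D.φ p.1 q.1 p.2 = q.2

/-- The glued space `𝒢 = ⨆ᵢ 𝒢ᵢ / ∼`, with the quotient topology. -/
def Glued (D : GluingData X I U A) : Type max u v :=
  Quot D.Rel

instance (D : GluingData X I U A) : TopologicalSpace D.Glued :=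
  inferInstanceAs (TopologicalSpace (Quot D.Rel))

/-- The canonical quotient map `π_i : 𝒢_i → 𝒢`. -/
def π (D : GluingData X I U A) (i : I) (g : A i) : D.Glued :=
  Quot.mk D.Rel ⟨i, g⟩

end GluingData

namespace GluingData

variable {X : Type u} [TopologicalSpace X] {I : Type v}
  {U : I → Set X} {A : I → Type u} [∀ i, TopologicalSpace (A i)]

/-- The **weak gluing condition**: every composable pair of arrows of the glued
space has both members represented in a single `𝒢_i`. -/
def WeakGluing (D : GluingData X I U A) : Prop :=
  ∀ p q : Σ i, A i, (D.G p.1).d p.2 = (D.G q.1).r q.2 →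
    ∃ (k : I) (g h : A k),
      D.π k g = Quot.mk D.Rel p ∧ D.π k h = Quot.mk D.Rel q

end GluingData

/-!
Arrows of the glued groupoid with different ranges are separated by pulling back disjoint
neighbourhoods in `X` along the continuous range map. If `r g = r h`, then `(g⁻¹, h)` is
composable, so by the weak gluing condition `g⁻¹` and `h`, hence `g` and `h`, have
representatives in a single `𝒢_k`. The map `𝒢_k → 𝒢` is injective and open, so it carries
disjoint neighbourhoods in the Hausdorff space `𝒢_k` to disjoint neighbourhoods in `𝒢`.
-/

open Topology

namespace GroupoidOn

variable {X : Type u} {A : Type v} {U : Set X} (G : GroupoidOn X A U)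

theorem unit_congr {x y : X} (hx : x ∈ U) (hy : y ∈ U) (h : x = y) :
    G.unit ⟨x, hx⟩ = G.unit ⟨y, hy⟩ := by
  subst h; rfl

theorem inv_inv (g : A) : G.inv (G.inv g) = g := by
  have hd : G.d (G.inv (G.inv g)) = G.d g := by rw [G.d_inv, G.r_inv]
  calc G.inv (G.inv g)
      = G.mul (G.inv (G.inv g)) (G.unit ⟨G.d (G.inv (G.inv g)), G.d_mem _⟩) :=
        (G.mul_unit _).symm
    _ = G.mul (G.inv (G.inv g)) (G.mul (G.inv g) g) := by
        rw [G.inv_mul g, G.unit_congr _ _ hd]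
    _ = G.mul (G.mul (G.inv (G.inv g)) (G.inv g)) g :=
        (G.mul_assoc' _ _ _ (G.d_inv (G.inv g)) (G.d_inv g)).symm
    _ = G.mul (G.unit ⟨G.r g, G.r_mem g⟩) g := by
        rw [G.inv_mul (G.inv g), G.unit_congr _ _ (G.d_inv g)]
    _ = g := G.unit_mul g

end GroupoidOn

namespace GluingData

variable {X : Type u} [TopologicalSpace X] {I : Type v}
  {U : I → Set X} {A : I → Type u} [∀ i, TopologicalSpace (A i)]
  (D : GluingData X I U A)

theorem rel_refl (p : Σ i, A i) : D.Rel p p :=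
  ⟨⟨⟨(D.G p.1).d_mem p.2, (D.G p.1).d_mem p.2⟩, (D.G p.1).r_mem p.2, (D.G p.1).r_mem p.2⟩,
    D.φ_id p.1 p.2⟩

theorem rel_symm {p q : Σ i, A i} : D.Rel p q → D.Rel q p := by
  obtain ⟨i, g⟩ := p
  obtain ⟨j, _⟩ := q
  rintro ⟨hg, hφ⟩
  dsimp only at hg hφ
  subst hφ
  have hφg := D.φ_mapsTo i _ hg
  exact ⟨⟨⟨hφg.1.2, hφg.1.1⟩, hφg.2.2, hφg.2.1⟩, D.φ_symm _ _ g hg⟩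

theorem rel_trans {p q s : Σ i, A i} : D.Rel p q → D.Rel q s → D.Rel p s := by
  obtain ⟨i, g⟩ := p
  obtain ⟨j, _⟩ := q
  obtain ⟨k, _⟩ := s
  rintro ⟨hg, hφ⟩ ⟨hφg, hφφ⟩
  dsimp only at hg hφ hφg hφφ
  subst hφ hφφ
  have hdg : (D.G i).d g ∈ U k := D.φ_d i j g hg ▸ hφg.1.2
  have hrg : (D.G i).r g ∈ U k := D.φ_r i j g hg ▸ hφg.2.2
  exact ⟨⟨⟨hg.1.1, hdg⟩, hg.2.1, hrg⟩, (D.φ_trans i j k g ⟨⟨hg.1, hdg⟩, hg.2, hrg⟩).symm⟩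

theorem rel_equivalence : Equivalence D.Rel :=
  ⟨D.rel_refl, D.rel_symm, D.rel_trans⟩

theorem mk_eq_iff {p q : Σ i, A i} : Quot.mk D.Rel p = Quot.mk D.Rel q ↔ D.Rel p q :=
  Quot.eq.trans D.rel_equivalence.eqvGen_iff

theorem π_injective (k : I) : Function.Injective (D.π k) := fun a b h => by
  simpa only [D.φ_id] using (D.mk_eq_iff.mp h).2

theorem rel_inv {i j : I} {g : A i} {h : A j} (hgh : D.Rel ⟨i, g⟩ ⟨j, h⟩) :
    D.Rel ⟨i, (D.G i).inv g⟩ ⟨j, (D.G j).inv h⟩ := by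
  obtain ⟨hg, hφ⟩ := hgh
  dsimp only at hg hφ
  subst hφ
  refine ⟨⟨?_, ?_⟩, D.φ_inv i j g hg⟩
  · rw [(D.G i).d_inv]; exact hg.2
  · rw [(D.G i).r_inv]; exact hg.1

theorem isOpen_res (i : I) {V : Set X} (hV : IsOpen V) : IsOpen ((D.G i).res V) :=
  (hV.preimage (D.top i).continuous_d).inter (hV.preimage (D.top i).continuous_r)

theorem preimage_image_π (k l : I) (V : Set (A k)) :
    D.π l ⁻¹' (D.π k '' V) = (D.G l).res (U l ∩ U k) ∩ D.φ l k ⁻¹' V := by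
  ext b
  constructor
  · rintro ⟨a, ha, hab⟩
    obtain ⟨hb, hφb⟩ := D.rel_symm (D.mk_eq_iff.mp hab)
    exact ⟨hb, show D.φ l k b ∈ V from hφb ▸ ha⟩
  · rintro ⟨hb, hφb⟩
    exact ⟨D.φ l k b, hφb, D.mk_eq_iff.mpr (D.rel_symm ⟨hb, rfl⟩)⟩

theorem isOpenMap_π (k : I) : IsOpenMap (D.π k) := fun V hV => by
  refine isQuotientMap_quot_mk.isOpen_preimage.mp (isOpen_sigma_iff.mpr fun l => ?_)
  change IsOpen (D.π l ⁻¹' (D.π k '' V))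
  rw [D.preimage_image_π]
  exact (D.φ_cont l k).isOpen_inter_preimage
    (D.isOpen_res l ((D.open_U l).inter (D.open_U k))) hV

theorem disjoint_nhds_π {k : I} [T2Space (A k)] {a b : A k} (hab : a ≠ b) :
    Disjoint (𝓝 (D.π k a)) (𝓝 (D.π k b)) :=
  ((Filter.disjoint_map (D.π_injective k)).mpr (disjoint_nhds_nhds.mpr hab)).mono
    ((D.isOpenMap_π k).nhds_le a) ((D.isOpenMap_π k).nhds_le b)

def rMap : D.Glued → X :=
  Quot.lift (fun p : Σ i, A i => (D.G p.1).r p.2) fun _ _ ⟨hg, hφ⟩ =>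
    hφ ▸ (D.φ_r _ _ _ hg).symm

theorem continuous_rMap : Continuous D.rMap :=
  continuous_quot_lift _ (continuous_sigma fun i => (D.top i).continuous_r)

theorem exists_π_eq_of_rMap_eq (hw : D.WeakGluing) {x y : D.Glued}
    (hxy : D.rMap x = D.rMap y) : ∃ (k : I) (a b : A k), D.π k a = x ∧ D.π k b = y := by
  induction x using Quot.ind with | _ p => ?_
  induction y using Quot.ind with | _ q => ?_
  obtain ⟨i, g⟩ := p
  have hcomp : (D.G i).d ((D.G i).inv g) = (D.G q.1).r q.2 := ((D.G i).d_inv g).trans hxy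
  obtain ⟨k, a, b, ha, hb⟩ := hw ⟨i, (D.G i).inv g⟩ q hcomp
  have hrel := D.rel_inv (D.mk_eq_iff.mp ha)
  rw [(D.G i).inv_inv] at hrel
  exact ⟨k, (D.G k).inv a, b, D.mk_eq_iff.mpr hrel, hb⟩

end GluingData

theorem statement_2_general
    {X : Type u} [TopologicalSpace X] [T2Space X]
    {I : Type v} {U : I → Set X} {A : I → Type u} [∀ i, TopologicalSpace (A i)]
    (D : GluingData X I U A) (hw : D.WeakGluing)
    (h2 : ∀ i, T2Space (A i)) :
    T2Space D.Glued := by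
  refine t2Space_iff_disjoint_nhds.mpr fun x y hxy => ?_
  by_cases hr : D.rMap x = D.rMap y
  · obtain ⟨k, a, b, rfl, rfl⟩ := D.exists_π_eq_of_rMap_eq hw hr
    have := h2 k
    exact D.disjoint_nhds_π fun hab => hxy (congrArg (D.π k) hab)
  · exact (D.continuous_rMap.tendsto x).disjoint (disjoint_nhds_nhds.mpr hr)
      (D.continuous_rMap.tendsto y)

/-- Let `(𝒢_i)_{i∈I}` be a family of locally compact groupoids
satisfying the weak gluing condition.  If each `𝒢_i` is a Hausdorff groupoid,
then the glued groupoid `𝒢 = ⋃_{i∈I} 𝒢_i` is Hausdorff. -/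
theorem statement_2
    {X : Type u} [TopologicalSpace X] [LocallyCompactSpace X] [T2Space X]
    {I : Type v} {U : I → Set X} {A : I → Type u} [∀ i, TopologicalSpace (A i)]
    [∀ i, LocallyCompactSpace (A i)]
    (D : GluingData X I U A) (hw : D.WeakGluing)
    (h2 : ∀ i, T2Space (A i)) :
    T2Space D.Glued :=
  statement_2_general D hw h2
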